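/- For every δ ∈ (0,√2) and M > 0, there exist a shock ε ∈ ℝ³ and conjectured interaction matrices P^{(1)}, P^{(2)}, P^{(3)} (each a 3-cycle with one edge weight reduced from 1 to 1-δ/√2) satisfying ‖P^{(i)} - P^{(j)}‖_F ≤ δ for all i,j, such that player 2's game-to-real gap equals 2γ²(√2 - δ)/δ for ε = (γ, -γ, -γ), which exceeds M for γ large enough. -/
import Mathlib


open Matrix

/-- Cost of player `i` in a scalar-action quadratic network game on `Fin 3`,
under interaction matrix `P` and shock `ε`. -/
noncomputable def J3 (P : Matrix (Fin 3) (Fin 3) ℝ) (ε : Fin 3 → ℝ) (i : Fin 3)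
    (u : Fin 3 → ℝ) : ℝ :=
  (1 / 2) * u i ^ 2 - u i * (P.mulVec u i + ε i)

/-- Frobenius norm of a real matrix. -/
noncomputable def frob {a b : Type*} [Fintype a] [Fintype b]
    (A : Matrix a b ℝ) : ℝ :=
  Real.sqrt (∑ k, ∑ l, A k l ^ 2)

lemma alg_aux (s γ : ℝ) (hs : s ≠ 0) :
    1 / 2 * (-γ / s) ^ 2 - -γ / s * ((1 - s) * (γ * (2 * s - 1) / s) + -γ) -
      (1 / 2 * (-γ / s) ^ 2 - -γ / s * ((1 - s) * (-γ / s) + -γ)) =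
    2 * γ ^ 2 * (1 - s) / s := by
  field_simp
  ring

lemma alg_aux2 (M d t : ℝ) (hd : d ≠ 0) (ht : t - d ≠ 0) :
    2 * (M * d / (t - d)) * (t - d) / d = 2 * M := by
  field_simp

lemma inv_aux (p q r : ℝ) (h : 1 - p*q*r ≠ 0) :
    (1 - !![(0:ℝ),0,p;q,0,0;0,r,0])⁻¹ = (1-p*q*r)⁻¹ • !![1,p*r,p;q,1,p*q;q*r,r,1] := by
  apply Matrix.inv_eq_right_inv
  rw [Matrix.mul_smul]
  have : (1 - !![(0:ℝ),0,p;q,0,0;0,r,0]) * !![1,p*r,p;q,1,p*q;q*r,r,1] = (1-p*q*r) • 1 := by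
    ext i j
    fin_cases i <;> fin_cases j <;>
      simp [Matrix.mul_apply, Fin.sum_univ_three, Matrix.one_apply] <;> ring
  rw [this, smul_smul, inv_mul_cancel₀ h, one_smul]

/-- for every `δ ∈ (0,√2)` and `M > 0`, with conjectured interaction
matrices `P⁽¹⁾, P⁽²⁾, P⁽³⁾` (3-cycles with one edge weight reduced from `1` to
`1-δ/√2`) satisfying `‖P⁽ⁱ⁾-P⁽ʲ⁾‖_F ≤ δ`, there is a shock `ε = (γ,-γ,-γ)` for
which player 2's game-to-real gap equals `2γ²(√2-δ)/δ` and exceeds `M`.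
Players are indexed by `0,1,2`, so "player 2" is index `1`. -/
theorem unbounded_gap_from_network (δ M : ℝ) (hδ : 0 < δ) (hδ' : δ < Real.sqrt 2)
    (hM : 0 < M)
    (Pf : Fin 3 → Matrix (Fin 3) (Fin 3) ℝ)
    (hP1 : Pf 0 = !![0, 0, 1 - δ / Real.sqrt 2; 1, 0, 0; 0, 1, 0])
    (hP2 : Pf 1 = !![0, 0, 1; 1 - δ / Real.sqrt 2, 0, 0; 0, 1, 0])
    (hP3 : Pf 2 = !![0, 0, 1; 1, 0, 0; 0, 1 - δ / Real.sqrt 2, 0]) :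
    (∀ i j : Fin 3, frob (Pf i - Pf j) ≤ δ) ∧
    ∃ γ : ℝ,
      (J3 (Pf 1) ![γ, -γ, -γ] 1
          (fun x => ((1 - Pf x)⁻¹.mulVec ![γ, -γ, -γ]) x)
        - J3 (Pf 1) ![γ, -γ, -γ] 1 ((1 - Pf 1)⁻¹.mulVec ![γ, -γ, -γ])
        = 2 * γ ^ 2 * (Real.sqrt 2 - δ) / δ) ∧
      M < 2 * γ ^ 2 * (Real.sqrt 2 - δ) / δ := by
  have h2 : (0:ℝ) < Real.sqrt 2 := Real.sqrt_pos.mpr (by norm_num)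
  set s : ℝ := δ / Real.sqrt 2 with hsdef
  have hs : 0 < s := div_pos hδ h2
  have hs1 : s < 1 := (div_lt_one h2).mpr hδ'
  have hsδ : s * Real.sqrt 2 = δ := div_mul_cancel₀ δ h2.ne'
  have hsq : Real.sqrt 2 ^ 2 = 2 := Real.sq_sqrt (by norm_num)
  have hδ2 : δ ^ 2 = 2 * s ^ 2 := by rw [← hsδ, mul_pow, hsq]; ring
  have gen : ∀ A B : Matrix (Fin 3) (Fin 3) ℝ,
      (∑ k, ∑ l, (A - B) k l ^ 2) ≤ δ ^ 2 → frob (A - B) ≤ δ := fun A B h =>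
    le_trans (Real.sqrt_le_sqrt h) (le_of_eq (Real.sqrt_sq hδ.le))
  constructor
  · have e00 : frob (Pf 0 - Pf 0) ≤ δ := by
      apply gen; rw [hP1]; simp [Fin.sum_univ_three]; nlinarith [hδ2, hs]
    have e01 : frob (Pf 0 - Pf 1) ≤ δ := by
      apply gen; rw [hP1, hP2]; simp [Fin.sum_univ_three]; nlinarith [hδ2, hs]
    have e02 : frob (Pf 0 - Pf 2) ≤ δ := by
      apply gen; rw [hP1, hP3]; simp [Fin.sum_univ_three]; nlinarith [hδ2, hs]
    have e10 : frob (Pf 1 - Pf 0) ≤ δ := by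
      apply gen; rw [hP1, hP2]; simp [Fin.sum_univ_three]; nlinarith [hδ2, hs]
    have e11 : frob (Pf 1 - Pf 1) ≤ δ := by
      apply gen; rw [hP2]; simp [Fin.sum_univ_three]; nlinarith [hδ2, hs]
    have e12 : frob (Pf 1 - Pf 2) ≤ δ := by
      apply gen; rw [hP2, hP3]; simp [Fin.sum_univ_three]; nlinarith [hδ2, hs]
    have e20 : frob (Pf 2 - Pf 0) ≤ δ := by
      apply gen; rw [hP1, hP3]; simp [Fin.sum_univ_three]; nlinarith [hδ2, hs]
    have e21 : frob (Pf 2 - Pf 1) ≤ δ := by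
      apply gen; rw [hP2, hP3]; simp [Fin.sum_univ_three]; nlinarith [hδ2, hs]
    have e22 : frob (Pf 2 - Pf 2) ≤ δ := by
      apply gen; rw [hP3]; simp [Fin.sum_univ_three]; nlinarith [hδ2, hs]
    intro i j
    fin_cases i <;> fin_cases j <;> assumption
  · have hne0 : (1:ℝ) - (1-s)*1*1 ≠ 0 := by
      rw [show (1:ℝ) - (1-s)*1*1 = s by ring]; exact hs.ne'
    have hne1 : (1:ℝ) - 1*(1-s)*1 ≠ 0 := by
      rw [show (1:ℝ) - 1*(1-s)*1 = s by ring]; exact hs.ne'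
    have hne2 : (1:ℝ) - 1*1*(1-s) ≠ 0 := by
      rw [show (1:ℝ) - 1*1*(1-s) = s by ring]; exact hs.ne'
    have hI0 : (1 - Pf 0)⁻¹ =
        ((1:ℝ)-(1-s)*1*1)⁻¹ • !![1,(1-s)*1,1-s;1,1,(1-s)*1;1*1,1,1] := by
      rw [hP1]; exact inv_aux (1-s) 1 1 hne0
    have hI1 : (1 - Pf 1)⁻¹ =
        ((1:ℝ)-1*(1-s)*1)⁻¹ • !![1,1*1,1;1-s,1,1*(1-s);(1-s)*1,1,1] := by
      rw [hP2]; exact inv_aux 1 (1-s) 1 hne1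
    have hI2 : (1 - Pf 2)⁻¹ =
        ((1:ℝ)-1*1*(1-s))⁻¹ • !![1,1*(1-s),1;1,1,1*1;1*(1-s),1-s,1] := by
      rw [hP3]; exact inv_aux 1 1 (1-s) hne2
    have gap : ∀ γ : ℝ,
        J3 (Pf 1) ![γ, -γ, -γ] 1
            (fun x => ((1 - Pf x)⁻¹.mulVec ![γ, -γ, -γ]) x)
          - J3 (Pf 1) ![γ, -γ, -γ] 1 ((1 - Pf 1)⁻¹.mulVec ![γ, -γ, -γ])
          = 2 * γ ^ 2 * (Real.sqrt 2 - δ) / δ := by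
      intro γ
      have v0 : ((1 - Pf 0)⁻¹.mulVec ![γ, -γ, -γ]) 0 = γ * (2*s-1) / s := by
        rw [hI0, Matrix.smul_mulVec]
        simp [Matrix.mulVec, dotProduct, Fin.sum_univ_three]
        field_simp
        ring
      have v1 : ((1 - Pf 1)⁻¹.mulVec ![γ, -γ, -γ]) 1 = -γ / s := by
        rw [hI1, Matrix.smul_mulVec]
        simp [Matrix.mulVec, dotProduct, Fin.sum_univ_three]
        try field_simp
        try ring
      have w0 : ((1 - Pf 1)⁻¹.mulVec ![γ, -γ, -γ]) 0 = -γ / s := by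
        rw [hI1, Matrix.smul_mulVec]
        simp [Matrix.mulVec, dotProduct, Fin.sum_univ_three]
        try field_simp
        try ring
      have mv : ∀ u : Fin 3 → ℝ, (Pf 1).mulVec u 1 = (1-s) * u 0 := by
        intro u; rw [hP2]
        simp [Matrix.mulVec, dotProduct, Fin.sum_univ_three]
      have hrhs : 2 * γ ^ 2 * (Real.sqrt 2 - δ) / δ = 2 * γ ^ 2 * (1-s) / s := by
        rw [← hsδ]; rw [div_eq_div_iff (by positivity) hs.ne']
        ring
      rw [hrhs]
      unfold J3
      rw [mv, mv]
      simp only []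
      rw [v0, v1, w0]
      rw [show (![γ, -γ, -γ] : Fin 3 → ℝ) 1 = -γ from rfl]
      exact alg_aux s γ hs.ne'
    refine ⟨Real.sqrt (M * δ / (Real.sqrt 2 - δ)), gap _, ?_⟩
    have hpos : 0 < M * δ / (Real.sqrt 2 - δ) :=
      div_pos (mul_pos hM hδ) (by linarith)
    have hγ2 : Real.sqrt (M * δ / (Real.sqrt 2 - δ)) ^ 2 = M * δ / (Real.sqrt 2 - δ) :=
      Real.sq_sqrt hpos.le
    rw [hγ2]
    rw [alg_aux2 M δ (Real.sqrt 2) hδ.ne' (sub_ne_zero.mpr hδ'.ne')]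
    linarith
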